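/- arXiv:1509.03327 — 9 statements merged into one kernel-verified Lean document; each statement's English description precedes it below -/
import Mathlib

section
/- Suppose n, m, k ∈ ℕ satisfy n ≥ 2^{k+1} + 1 and 2^k + 1 ≤ m ≤ 2^{k+1} (Player 1 is in the weeds at level k). Then the value of ``Guess Who?'' is p(n,m) = 2^{k+1}/n − (2/3)·(2^{2k+1} + 1)/(n·m). -/
/-!
Write `V(n, m) = n m p(n, m)`; the recurrence reads `V(n, m) = n m - min_b (V(m, b) + V(m, n - b))`.
Fix `2^k < m ≤ 2^(k+1)`. By induction on `n + m`, the profile `x ↦ V(m, x)` is the convex function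
`max_s (2^s x - (4^s + 2)/3)` for `x ≤ 2^k`, and beyond `2^k` it jumps by `2` and continues with
slope `m`. The convex part has slopes at most `2^k < m`, so for `n > 2^(k+1)` (Player 1 in the
weeds) the cheapest split is `b = 2^k`, giving `V(n, m) = 2^(k+1) m - (4^(k+1) + 2)/3`. For
`2^j < n ≤ 2^(j+1)` with `j ≤ k` (Player 1 has the lead) the line of slope `2^j` bounds the whole
profile from below, and the even split lies on it.
-/

namespace GuessWho

def supportLine (s : ℕ) (x : ℚ) : ℚ := 2 ^ s * x - (2 ^ (2 * s) + 2) / 3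

lemma supportLine_sub_supportLine (s t : ℕ) (x : ℚ) :
    supportLine s x - supportLine t x = (2 ^ s - 2 ^ t) * (3 * x - 2 ^ s - 2 ^ t) / 3 := by
  unfold supportLine
  ring

lemma supportLine_le_of_le_two_pow_le_two_mul (t : ℕ) {s : ℕ} {x : ℚ} (h₁ : x ≤ 2 ^ s)
    (h₂ : 2 ^ s ≤ 2 * x) : supportLine t x ≤ supportLine s x := by
  rw [← sub_nonneg, supportLine_sub_supportLine]
  refine div_nonneg ?_ (by norm_num)
  rcases lt_or_ge t s with hts | hst
  · have : (2 : ℚ) ^ (t + 1) ≤ 2 ^ s := pow_le_pow_right₀ (by norm_num) hts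
    rw [pow_succ] at this
    exact mul_nonneg (by linarith) (by linarith)
  · rcases hst.eq_or_lt with rfl | hst
    · simp
    have : (2 : ℚ) ^ (s + 1) ≤ 2 ^ t := pow_le_pow_right₀ (by norm_num) hst
    rw [pow_succ] at this
    exact mul_nonneg_of_nonpos_of_nonpos (by linarith) (by linarith)

lemma supportLine_eq_of_le_two_pow_le_two_mul {s t : ℕ} {x : ℚ} (hs₁ : x ≤ 2 ^ s)
    (hs₂ : 2 ^ s ≤ 2 * x) (ht₁ : x ≤ 2 ^ t) (ht₂ : 2 ^ t ≤ 2 * x) :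
    supportLine s x = supportLine t x :=
  (supportLine_le_of_le_two_pow_le_two_mul s ht₁ ht₂).antisymm
    (supportLine_le_of_le_two_pow_le_two_mul t hs₁ hs₂)

lemma supportLine_le_of_le_of_two_pow_le {t s : ℕ} {x : ℚ} (hts : t ≤ s) (hx : 2 ^ s ≤ x) :
    supportLine t x ≤ supportLine s x := by
  rw [← sub_nonneg, supportLine_sub_supportLine]
  have : (2 : ℚ) ^ t ≤ 2 ^ s := pow_le_pow_right₀ (by norm_num) hts
  have : (0 : ℚ) < 2 ^ s := by positivity
  exact div_nonneg (mul_nonneg (by linarith) (by linarith)) (by norm_num)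

lemma exists_two_pow_lt_le {x : ℕ} (hx : 2 ≤ x) : ∃ t, 2 ^ t < x ∧ x ≤ 2 ^ (t + 1) := by
  have h₁ := Nat.pow_log_le_self 2 (show x - 1 ≠ 0 by omega)
  have h₂ := Nat.lt_pow_succ_log_self (b := 2) (by norm_num) (x - 1)
  exact ⟨Nat.log 2 (x - 1), by omega, by omega⟩

def ValueRecurrence (p : ℕ → ℕ → ℚ) : Prop :=
  ∀ n m : ℕ, ∀ hn : 2 ≤ n, 2 ≤ m →
    p n m = (Finset.Icc 1 (n - 1)).sup' (Finset.nonempty_Icc.mpr (Nat.le_sub_of_add_le hn))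
      (fun b => 1 - (b : ℚ) / (n : ℚ) * p m b - ((n - b : ℕ) : ℚ) / (n : ℚ) * p m (n - b))

def scaledValue (p : ℕ → ℕ → ℚ) (n m : ℕ) : ℚ := n * m * p n m

lemma scaledValue_eq_of_isLeast {p : ℕ → ℕ → ℚ} (hrec : ValueRecurrence p)
    {n m : ℕ} (hn : 2 ≤ n) (hm : 2 ≤ m) {c : ℚ}
    (hc : IsLeast ((fun b => scaledValue p m b + scaledValue p m (n - b)) '' Set.Icc 1 (n - 1)) c) :
    scaledValue p n m = n * m - c := by
  have hsplit : ∀ b : ℕ, 1 - (b : ℚ) / n * p m b - ((n - b : ℕ) : ℚ) / n * p m (n - b)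
      = 1 - (scaledValue p m b + scaledValue p m (n - b)) / (n * m) := by
    intro b
    simp only [scaledValue]
    field_simp
    ring
  obtain ⟨⟨b₀, hb₀, rfl⟩, hle⟩ := hc
  suffices h : (Finset.Icc 1 (n - 1)).sup' _ (fun b => 1 - (b : ℚ) / n * p m b
      - ((n - b : ℕ) : ℚ) / n * p m (n - b))
      = 1 - (scaledValue p m b₀ + scaledValue p m (n - b₀)) / (n * m) by
    rw [scaledValue, hrec n m hn hm, h]
    field_simp
  refine le_antisymm (Finset.sup'_le _ _ fun b hb => ?_) ?_
  · rw [hsplit]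
    have : (0 : ℚ) ≤ n * m := by positivity
    exact sub_le_sub_left (div_le_div_of_nonneg_right (hle ⟨b, Finset.mem_Icc.mp hb, rfl⟩) this) 1
  · rw [← hsplit]
    exact Finset.le_sup'
      (fun b : ℕ => 1 - (b : ℚ) / n * p m b - ((n - b : ℕ) : ℚ) / n * p m (n - b))
      (Finset.mem_Icc.mpr hb₀)

/-- The shape of `x ↦ V(m, x)` on `1 ≤ x < n`, for `2^k < m ≤ 2^(k+1)`. -/
structure IsValueProfile (W : ℕ → ℚ) (m k n : ℕ) : Prop where
  eq_supportLine : ∀ x, 1 ≤ x → x ≤ 2 ^ k → x < n →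
    ∃ s : ℕ, x ≤ 2 ^ s ∧ 2 ^ s ≤ 2 * x ∧ W x = supportLine s x
  eq_of_two_pow_lt : ∀ x, 2 ^ k < x → x < n →
    W x = supportLine k (2 ^ k) + 2 + m * (x - 2 ^ k)

namespace IsValueProfile

variable {W : ℕ → ℚ} {m k n : ℕ}

lemma eq_supportLine_of_le_two_pow_le_two_mul (hW : IsValueProfile W m k n) {x s : ℕ}
    (hx : 1 ≤ x) (hxk : x ≤ 2 ^ k) (hxn : x < n) (hs₁ : x ≤ 2 ^ s) (hs₂ : 2 ^ s ≤ 2 * x) :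
    W x = supportLine s x := by
  obtain ⟨t, ht₁, ht₂, hWx⟩ := hW.eq_supportLine x hx hxk hxn
  rw [hWx]
  exact supportLine_eq_of_le_two_pow_le_two_mul (by exact_mod_cast ht₁) (by exact_mod_cast ht₂)
    (by exact_mod_cast hs₁) (by exact_mod_cast hs₂)

lemma supportLine_add_le (hW : IsValueProfile W m k n) (hkm : 2 ^ k ≤ m) {x : ℕ} (hx : 1 ≤ x)
    (hxn : x < n) : supportLine k (2 ^ k) + m * (x - 2 ^ k) ≤ W x := by
  have hkm' : (2 : ℚ) ^ k ≤ m := by exact_mod_cast hkm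
  rcases le_or_gt x (2 ^ k) with hxk | hxk
  · obtain ⟨s, hs₁, hs₂, hWx⟩ := hW.eq_supportLine x hx hxk hxn
    have hxk' : (x : ℚ) ≤ 2 ^ k := by exact_mod_cast hxk
    calc supportLine k (2 ^ k) + m * (x - 2 ^ k)
        ≤ supportLine k (2 ^ k) + 2 ^ k * (x - 2 ^ k) := by nlinarith
      _ = supportLine k x := by unfold supportLine; ring
      _ ≤ W x := hWx ▸ supportLine_le_of_le_two_pow_le_two_mul k
          (by exact_mod_cast hs₁) (by exact_mod_cast hs₂)
  · rw [hW.eq_of_two_pow_lt x hxk hxn]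
    linarith

lemma supportLine_le (hW : IsValueProfile W m k n) (hkm : 2 ^ k ≤ m) {t x : ℕ} (htk : t ≤ k)
    (hx : 1 ≤ x) (hxn : x < n) : supportLine t x ≤ W x := by
  rcases le_or_gt x (2 ^ k) with hxk | hxk
  · obtain ⟨s, hs₁, hs₂, hWx⟩ := hW.eq_supportLine x hx hxk hxn
    exact hWx ▸ supportLine_le_of_le_two_pow_le_two_mul t
      (by exact_mod_cast hs₁) (by exact_mod_cast hs₂)
  · have hkm' : (2 : ℚ) ^ k ≤ m := by exact_mod_cast hkm
    have hxk' : (2 : ℚ) ^ k < x := by exact_mod_cast hxk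
    calc supportLine t x ≤ supportLine k x := supportLine_le_of_le_of_two_pow_le htk hxk'.le
      _ = supportLine k (2 ^ k) + 2 ^ k * (x - 2 ^ k) := by unfold supportLine; ring
      _ ≤ supportLine k (2 ^ k) + m * (x - 2 ^ k) := by nlinarith
      _ ≤ W x := hW.supportLine_add_le hkm hx hxn

lemma isLeast_weeds (hW : IsValueProfile W m k n) (hkm : 2 ^ k ≤ m) (hn : 2 ^ (k + 1) < n) :
    IsLeast ((fun b => W b + W (n - b)) '' Set.Icc 1 (n - 1))
      (m * (n - 2 ^ (k + 1)) + 2 * supportLine k (2 ^ k) + 2) := by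
  have hpow : (2 : ℚ) ^ (k + 1) = 2 * 2 ^ k := by ring
  have hpow' : 2 ^ (k + 1) = 2 * 2 ^ k := by ring
  have hk : 0 < 2 ^ k := Nat.two_pow_pos k
  have hcast : ∀ b ≤ n, ((n - b : ℕ) : ℚ) = n - b := fun b hb => by push_cast [hb]; ring
  refine ⟨⟨2 ^ k, ⟨Nat.one_le_two_pow, by omega⟩, ?_⟩, ?_⟩
  · have hlow := hW.eq_supportLine_of_le_two_pow_le_two_mul Nat.one_le_two_pow le_rfl
      (by omega) le_rfl (by omega)
    have hhigh := hW.eq_of_two_pow_lt (n - 2 ^ k) (by omega) (by omega)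
    simp only [hlow, hhigh, hcast (2 ^ k) (by omega)]
    push_cast
    rw [hpow]
    ring
  have hbound : ∀ a b, a + b = n → 1 ≤ b → 2 ^ k < a →
      m * (n - 2 ^ (k + 1)) + 2 * supportLine k (2 ^ k) + 2 ≤ W a + W b := by
    intro a b hab hb hak
    have hW₁ := hW.eq_of_two_pow_lt a hak (by omega)
    have hW₂ := hW.supportLine_add_le hkm hb (show b < n by omega)
    have hab' : (a : ℚ) + b = n := by exact_mod_cast hab
    rw [hpow, ← hab']
    linarith
  rintro _ ⟨b, ⟨hb₁, hbn⟩, rfl⟩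
  rcases le_or_gt b (2 ^ k) with hbk | hbk
  · linarith [hbound (n - b) b (by omega) hb₁ (by omega)]
  · exact hbound b (n - b) (by omega) (by omega) hbk

lemma isLeast_lead (hW : IsValueProfile W m k n) (hkm : 2 ^ k ≤ m) {j : ℕ} (hjk : j ≤ k)
    (hjn : 2 ^ j < n) (hnj : n ≤ 2 ^ (j + 1)) :
    IsLeast ((fun b => W b + W (n - b)) '' Set.Icc 1 (n - 1)) (2 * supportLine j (n / 2)) := by
  have hpow : 2 ^ (j + 1) = 2 * 2 ^ j := by ring
  have hjk' : 2 ^ j ≤ 2 ^ k := Nat.pow_le_pow_right (by norm_num) hjk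
  have hsum : ∀ b ≤ n, supportLine j b + supportLine j ((n - b : ℕ) : ℚ)
      = 2 * supportLine j (n / 2) := fun b hb => by
    unfold supportLine
    push_cast [hb]
    ring
  refine ⟨⟨n / 2, ⟨by omega, by omega⟩, ?_⟩, ?_⟩
  · show W (n / 2) + W (n - n / 2) = _
    rw [hW.eq_supportLine_of_le_two_pow_le_two_mul (s := j) (by omega) (by omega) (by omega)
        (by omega) (by omega), hW.eq_supportLine_of_le_two_pow_le_two_mul (s := j) (by omega)
        (by omega) (by omega) (by omega) (by omega), hsum _ (by omega)]
  rintro _ ⟨b, ⟨hb₁, hbn⟩, rfl⟩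
  rw [← hsum b (by omega)]
  exact add_le_add (hW.supportLine_le hkm hjk hb₁ (by omega))
    (hW.supportLine_le hkm hjk (by omega) (by omega))

end IsValueProfile

def valueFormula (j k : ℕ) (n m : ℚ) : ℚ :=
  if k < j then supportLine (k + 1) m else n * m - 2 * supportLine j (n / 2)

lemma isValueProfile_scaledValue {p : ℕ → ℕ → ℚ} (hp : ∀ n : ℕ, 2 ≤ n → p n 1 = 0)
    {m k n : ℕ} (hm : 2 ≤ m) (hval : ∀ x t, x < n → 2 ^ t < x → x ≤ 2 ^ (t + 1) →
      scaledValue p m x = valueFormula k t m x) :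
    IsValueProfile (scaledValue p m) m k n where
  eq_supportLine x hx hxk hxn := by
    rcases hx.eq_or_lt with rfl | hx
    · exact ⟨0, le_rfl, by norm_num, by norm_num [scaledValue, supportLine, hp m hm]⟩
    obtain ⟨t, htx, hxt⟩ := exists_two_pow_lt_le hx
    have htk : t < k := (Nat.pow_lt_pow_iff_right (by norm_num)).mp (htx.trans_le hxk)
    refine ⟨t + 1, hxt, by rw [pow_succ]; omega, ?_⟩
    rw [hval x t hxn htx hxt, valueFormula, if_pos htk]
  eq_of_two_pow_lt x hkx hxn := by
    obtain ⟨t, htx, hxt⟩ := exists_two_pow_lt_le (Nat.one_le_two_pow.trans_lt hkx)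
    have hkt : ¬ t < k := fun htk =>
      absurd ((Nat.pow_lt_pow_iff_right (by norm_num)).mp (hkx.trans_le hxt)) (by omega)
    rw [hval x t hxn htx hxt, valueFormula, if_neg hkt]
    unfold supportLine
    ring

theorem scaledValue_eq_valueFormula {p : ℕ → ℕ → ℚ} (hp : ∀ n : ℕ, 2 ≤ n → p n 1 = 0)
    (hrec : ValueRecurrence p)
    {n m j k : ℕ} (hjn : 2 ^ j < n) (hnj : n ≤ 2 ^ (j + 1)) (hkm : 2 ^ k < m)
    (hmk : m ≤ 2 ^ (k + 1)) :
    scaledValue p n m = valueFormula j k n m := by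
  have hn : 2 ≤ n := Nat.one_le_two_pow.trans_lt hjn
  have hm : 2 ≤ m := Nat.one_le_two_pow.trans_lt hkm
  have hW : IsValueProfile (scaledValue p m) m k n :=
    isValueProfile_scaledValue hp hm fun x t hxn htx hxt =>
      scaledValue_eq_valueFormula hp hrec hkm hmk htx hxt
  unfold valueFormula
  split_ifs with hkj
  · have hkn : 2 ^ (k + 1) < n :=
      (Nat.pow_le_pow_right (by norm_num) hkj).trans_lt hjn
    rw [scaledValue_eq_of_isLeast hrec hn hm (hW.isLeast_weeds hkm.le hkn)]
    unfold supportLine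
    ring
  · exact scaledValue_eq_of_isLeast hrec hn hm (hW.isLeast_lead hkm.le (by omega) hjn hnj)
termination_by n + m

end GuessWho

/-- The value of "Guess Who?" when Player 1 is in the weeds at level `k`:
if `p` is the value function of the game (characterized by its recurrence),
`n ≥ 2^(k+1) + 1` and `2^k + 1 ≤ m ≤ 2^(k+1)`, then
`p n m = 2^(k+1)/n − (2/3)·(2^(2k+1)+1)/(n·m)`. -/
theorem guess_who_value_in_the_weeds
    (p : ℕ → ℕ → ℚ)
    (hp2 : ∀ n : ℕ, 2 ≤ n → p n 1 = 0)
    (hrec : ∀ n m : ℕ, ∀ hn : 2 ≤ n, 2 ≤ m →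
      p n m = (Finset.Icc 1 (n - 1)).sup' (Finset.nonempty_Icc.mpr (by omega))
        (fun b => 1 - (b : ℚ) / (n : ℚ) * p m b
          - ((n - b : ℕ) : ℚ) / (n : ℚ) * p m (n - b)))
    (n m k : ℕ) (hn : 2 ^ (k + 1) + 1 ≤ n) (hm1 : 2 ^ k + 1 ≤ m) (hm2 : m ≤ 2 ^ (k + 1)) :
    p n m = 2 ^ (k + 1) / (n : ℚ) - 2 / 3 * (2 ^ (2 * k + 1) + 1) / ((n : ℚ) * (m : ℚ)) := by
  obtain ⟨j, hjn, hnj⟩ := GuessWho.exists_two_pow_lt_le (Nat.one_le_two_pow.trans_lt hn)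
  have hkj : k < j := by
    have := (Nat.pow_lt_pow_iff_right (by norm_num)).mp (Nat.lt_of_succ_le hn |>.trans_le hnj)
    omega
  have hval := GuessWho.scaledValue_eq_valueFormula hp2 hrec hjn hnj hm1 hm2
  rw [GuessWho.scaledValue, GuessWho.valueFormula, if_pos hkj, GuessWho.supportLine] at hval
  have hn0 : (n : ℚ) ≠ 0 := by exact_mod_cast (show n ≠ 0 by omega)
  have hm0 : (m : ℚ) ≠ 0 := by exact_mod_cast (show m ≠ 0 by omega)
  field_simp
  linear_combination 3 * hval
end

section
/- Suppose n, m, k ∈ ℕ satisfy 2^k < n ≤ 2^{k+1} and 2^k < m (Player 1 has the upper hand at level k). Then for every b ∈ ℕ with 1 ≤ b ≤ n−1, one has 1 − (b/n)·q(m,b) − ((n−b)/n)·q(m,n−b) ≤ q_{U_k}(n,m), and equality holds when b = ⌊n/2⌋. Consequently q_{U_k}(n,m) = max_{b ∈ {1,…,n−1}} (1 − (b/n)·q(m,b) − ((n−b)/n)·q(m,n−b)). -/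
/-- The candidate value function when Player 1 is in the weeds at level `k`. -/
def qW (k n m : ℕ) : ℚ :=
  2 ^ (k + 1) / (n : ℚ) - 2 / 3 * (2 ^ (2 * k + 1) + 1) / ((m : ℚ) * (n : ℚ))

/-- The candidate value function when Player 1 has the upper hand at level `k`. -/
def qU (k n m : ℕ) : ℚ :=
  1 - 2 ^ k / (m : ℚ) + 2 / 3 * (2 ^ (2 * k) + 2) / ((m : ℚ) * (n : ℚ))

/-- The candidate value function `q` for "Guess Who?": `q 1 m = 1` (for `m ≥ 2`),
`q n 1 = 0` (for `n ≥ 2`); for `n, m ≥ 2`, with `k = ⌊log₂ (m-1)⌋` (so that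
`2^k < m ≤ 2^(k+1)`), `q n m = qW k n m` if `n > 2^(k+1)` (in the weeds at level `k`),
and otherwise `q n m = qU k' n m` with `k' = ⌊log₂ (n-1)⌋` (so `2^k' < n ≤ 2^(k'+1)`
and `2^k' < m`: the upper hand at level `k'`). -/
def q (n m : ℕ) : ℚ :=
  if n ≤ 1 then 1
  else if m ≤ 1 then 0
  else if 2 ^ (Nat.log 2 (m - 1) + 1) < n then qW (Nat.log 2 (m - 1)) n m
  else qU (Nat.log 2 (n - 1)) n m

/-!
Put `f b = m * b * q m b`. Then `m n (qU k n m - bidPayoff n m b)` equals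
`(f b - qLine k b) + (f (n - b) - qLine k (n - b))`, so it suffices that `qLine k ≤ f` on
`[1, 2^(k+1)]`, with equality on `[2^(k-1), 2^k]`, which contains both halves of `n`.
On a dyadic block `[2^(i-1), 2^i]` with `2^i < m`, `f` is the line `qLine i`, which dominates
every other `qLine k` there since `qLine i x - qLine k x = (2^i - 2^k)(x - (2^i + 2^k)/3)`.
On the one remaining block `q m b` is in the upper-hand case and
`f b - qLine k b = (m - 2^k)(b - 2^k) + 2`.
-/

def qLine (k : ℕ) (x : ℚ) : ℚ :=
  2 ^ k * x - (4 ^ k + 2) / 3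

def bidPayoff (n m b : ℕ) : ℚ :=
  1 - (b : ℚ) / (n : ℚ) * q m b - ((n - b : ℕ) : ℚ) / (n : ℚ) * q m (n - b)

lemma four_pow_eq_two_pow_mul_self (k : ℕ) : (4 : ℚ) ^ k = 2 ^ k * 2 ^ k := by
  rw [← mul_pow]; norm_num

lemma qLine_sub_qLine (i k : ℕ) (x : ℚ) :
    qLine i x - qLine k x = (2 ^ i - 2 ^ k) * (x - (2 ^ i + 2 ^ k) / 3) := by
  simp only [qLine, four_pow_eq_two_pow_mul_self]
  ring

lemma qLine_succ_two_pow (i : ℕ) : qLine (i + 1) (2 ^ i) = qLine i (2 ^ i) := by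
  rw [← sub_eq_zero, qLine_sub_qLine, pow_succ]
  ring

lemma qLine_le_qLine_of_mem (k i : ℕ) {x : ℚ} (hx₁ : 2 ^ i ≤ 2 * x) (hx₂ : x ≤ 2 ^ i) :
    qLine k x ≤ qLine i x := by
  rw [← sub_nonneg, qLine_sub_qLine]
  rcases lt_trichotomy k i with hki | rfl | hik
  · have : (2 : ℚ) ^ (k + 1) ≤ 2 ^ i := pow_le_pow_right₀ one_le_two hki
    rw [pow_succ] at this
    have : (0 : ℚ) ≤ 2 ^ k := by positivity
    exact mul_nonneg (by linarith) (by linarith)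
  · simp
  · have : (2 : ℚ) ^ (i + 1) ≤ 2 ^ k := pow_le_pow_right₀ one_le_two hik
    rw [pow_succ] at this
    have : (0 : ℚ) ≤ 2 ^ i := by positivity
    exact mul_nonneg_of_nonpos_of_nonpos (by linarith) (by linarith)

lemma mul_mul_qW (j m b : ℕ) (hm : m ≠ 0) (hb : b ≠ 0) :
    (m : ℚ) * b * qW j m b = qLine (j + 1) b := by
  simp only [qW, qLine, two_mul, pow_add, four_pow_eq_two_pow_mul_self]
  field_simp

lemma mul_mul_qU (k m b : ℕ) (hm : m ≠ 0) (hb : b ≠ 0) :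
    (m : ℚ) * b * qU k m b = qLine k b + (m - 2 ^ k) * (b - 2 ^ k) + 2 := by
  simp only [qU, qLine, two_mul, pow_add, four_pow_eq_two_pow_mul_self]
  field_simp
  ring

lemma log_sub_one_eq (k m : ℕ) (hm₁ : 2 ^ k < m) (hm₂ : m ≤ 2 ^ (k + 1)) :
    Nat.log 2 (m - 1) = k :=
  Nat.log_eq_of_pow_le_of_lt_pow (by omega) (by omega)

lemma q_one_right (n : ℕ) (hn : 2 ≤ n) : q n 1 = 0 := by
  simp [q, show ¬ n ≤ 1 by omega]

lemma q_eq_qW (k n m : ℕ) (hm₁ : 2 ^ k < m) (hm₂ : m ≤ 2 ^ (k + 1)) (hn : 2 ^ (k + 1) < n) :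
    q n m = qW k n m := by
  have : 1 ≤ 2 ^ k := Nat.one_le_two_pow
  simp [q, log_sub_one_eq k m hm₁ hm₂, hn, show ¬ n ≤ 1 by omega, show ¬ m ≤ 1 by omega]

lemma q_eq_qU (k n m : ℕ) (hn₁ : 2 ^ k < n) (hn₂ : n ≤ 2 ^ (k + 1)) (hm : 2 ^ k < m) :
    q n m = qU k n m := by
  have : 1 ≤ 2 ^ k := Nat.one_le_two_pow
  have hlog : k ≤ Nat.log 2 (m - 1) := Nat.le_log_of_pow_le one_lt_two (by omega)
  have : 2 ^ (k + 1) ≤ 2 ^ (Nat.log 2 (m - 1) + 1) := Nat.pow_le_pow_right two_pos (by omega)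
  simp [q, log_sub_one_eq k n hn₁ hn₂, show ¬ n ≤ 1 by omega, show ¬ m ≤ 1 by omega,
    show ¬ 2 ^ (Nat.log 2 (m - 1) + 1) < n by omega]

lemma two_pow_clog_lt_two_mul {b : ℕ} (hb : 1 ≤ b) : 2 ^ Nat.clog 2 b < 2 * b := by
  rcases h : Nat.clog 2 b with _ | i
  · omega
  · have : 2 ^ i < b := Nat.pow_lt_of_lt_clog (by omega)
    rw [pow_succ]
    omega

lemma mul_mul_q_eq_qLine_of_lt (i m b : ℕ) (hb₁ : 2 ^ i < 2 * b) (hb₂ : b ≤ 2 ^ i)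
    (hm : 2 ^ i < m) : (m : ℚ) * b * q m b = qLine i b := by
  rcases i with _ | j
  · obtain rfl : b = 1 := by omega
    norm_num [q_one_right m (by omega), qLine]
  · rw [pow_succ] at hb₁
    rw [q_eq_qW j m b (by omega) hb₂ hm, mul_mul_qW j m b (by omega) (by omega)]

lemma mul_mul_q_eq_qLine (i m b : ℕ) (hb₁ : 2 ^ i ≤ 2 * b) (hb₂ : b ≤ 2 ^ i)
    (hm : 2 ^ i < m) : (m : ℚ) * b * q m b = qLine i b := by
  rcases hb₁.lt_or_eq with hlt | heq
  · exact mul_mul_q_eq_qLine_of_lt i m b hlt hb₂ hm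
  · -- `b = 2^(i-1)` is where the lines `L_(i-1)` and `L_i` cross
    obtain ⟨t, rfl⟩ : ∃ t, i = t + 1 := ⟨i - 1, by rcases i with _ | _ <;> omega⟩
    obtain rfl : b = 2 ^ t := by rw [pow_succ] at heq; omega
    have : 2 ^ t < 2 ^ (t + 1) := Nat.pow_lt_pow_succ one_lt_two
    rw [mul_mul_q_eq_qLine_of_lt t m _ (by omega) le_rfl (by omega)]
    push_cast
    exact (qLine_succ_two_pow t).symm

lemma qLine_le_mul_mul_q (k m b : ℕ) (hm : 2 ^ k < m) (hb₁ : 1 ≤ b) (hb₂ : b ≤ 2 ^ (k + 1)) :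
    qLine k b ≤ (m : ℚ) * b * q m b := by
  set i := Nat.clog 2 b
  have hi₁ : 2 ^ i < 2 * b := two_pow_clog_lt_two_mul hb₁
  have hi₂ : b ≤ 2 ^ i := Nat.le_pow_clog one_lt_two b
  have hik : i ≤ k + 1 := Nat.clog_le_of_le_pow hb₂
  have hdom : qLine k b ≤ qLine i b :=
    qLine_le_qLine_of_mem k i (by exact_mod_cast hi₁.le) (by exact_mod_cast hi₂)
  by_cases hmi : 2 ^ i < m
  · rwa [mul_mul_q_eq_qLine_of_lt i m b hi₁ hi₂ hmi]
  · have hi : i = k + 1 := by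
      by_contra hne
      have : 2 ^ i ≤ 2 ^ k := Nat.pow_le_pow_right two_pos (by omega)
      omega
    rw [hi, pow_succ] at hi₁
    rw [hi] at hmi
    rw [q_eq_qU k m b hm (by omega) (by omega), mul_mul_qU k m b (by omega) (by omega)]
    have : (2 : ℚ) ^ k < m := by exact_mod_cast hm
    have : (2 : ℚ) ^ k < b := by exact_mod_cast (by omega : 2 ^ k < b)
    nlinarith

lemma qU_sub_bidPayoff (k n m b : ℕ) (hb : b ≤ n) (hn : n ≠ 0) (hm : m ≠ 0) :
    qU k n m - bidPayoff n m b =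
      ((m * b * q m b - qLine k b) + (m * (n - b : ℕ) * q m (n - b) - qLine k (n - b : ℕ)))
        / (m * n) := by
  simp only [qU, bidPayoff, qLine, Nat.cast_sub hb, two_mul, pow_add, four_pow_eq_two_pow_mul_self]
  field_simp
  ring

/-- The upper-hand lemma: if Player 1 has the upper hand at level `k`, then every bid
`1 ≤ b ≤ n - 1` yields payoff at most `qU k n m`, with equality at the half-splitting
bid `b = ⌊n/2⌋`; consequently `qU k n m` is the maximum over all bids. -/
theorem q_upper_hand_recurrence
    (n m k : ℕ) (hn1 : 2 ^ k < n) (hn2 : n ≤ 2 ^ (k + 1)) (hm : 2 ^ k < m) :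
    (∀ b : ℕ, 1 ≤ b → b ≤ n - 1 →
      1 - (b : ℚ) / (n : ℚ) * q m b - ((n - b : ℕ) : ℚ) / (n : ℚ) * q m (n - b)
        ≤ qU k n m) ∧
    (1 - ((n / 2 : ℕ) : ℚ) / (n : ℚ) * q m (n / 2)
      - ((n - n / 2 : ℕ) : ℚ) / (n : ℚ) * q m (n - n / 2) = qU k n m) ∧
    IsGreatest
      ((fun b : ℕ =>
        1 - (b : ℚ) / (n : ℚ) * q m b - ((n - b : ℕ) : ℚ) / (n : ℚ) * q m (n - b)) ''
        (Set.Icc 1 (n - 1)))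
      (qU k n m) := by
  change (∀ b, 1 ≤ b → b ≤ n - 1 → bidPayoff n m b ≤ qU k n m) ∧
    bidPayoff n m (n / 2) = qU k n m ∧ IsGreatest (bidPayoff n m '' Set.Icc 1 (n - 1)) (qU k n m)
  have : 1 ≤ 2 ^ k := Nat.one_le_two_pow
  rw [pow_succ] at hn2
  have hle (b : ℕ) (hb₁ : 1 ≤ b) (hb₂ : b ≤ n - 1) : bidPayoff n m b ≤ qU k n m := by
    have h₁ := qLine_le_mul_mul_q k m b hm hb₁ (by rw [pow_succ]; omega)
    have h₂ := qLine_le_mul_mul_q k m (n - b) hm (by omega) (by rw [pow_succ]; omega)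
    rw [← sub_nonneg, qU_sub_bidPayoff k n m b (by omega) (by omega) (by omega)]
    exact div_nonneg (by linarith) (by positivity)
  have heq : bidPayoff n m (n / 2) = qU k n m := by
    rw [eq_comm, ← sub_eq_zero, qU_sub_bidPayoff k n m _ (by omega) (by omega) (by omega),
      mul_mul_q_eq_qLine k m (n / 2) (by omega) (by omega) hm,
      mul_mul_q_eq_qLine k m (n - n / 2) (by omega) (by omega) hm]
    simp
  refine ⟨hle, heq, ⟨n / 2, ⟨by omega, by omega⟩, heq⟩, ?_⟩
  rintro _ ⟨b, ⟨hb₁, hb₂⟩, rfl⟩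
  exact hle b hb₁ hb₂
end

section
/- Let n, m, b, k ∈ ℕ with n ≥ 1, m ≥ 1 and 1 ≤ b ≤ n−1. Then 1 − (b/n)·q_{U_k}(m,b) − ((n−b)/n)·q_{U_k}(m,n−b) = 2^{k+1}/n − (2/3)·(2^{2k+1}+4)/(m·n); in particular this value does not depend on b, and it is strictly less than q_{W_k}(n,m) (the difference being exactly 2/(m·n)). -/
/-- Case II of the weeds lemma: if after either outcome of the bid the opponent has
the upper hand at level `k`, the payoff is `2^(k+1)/n − (2/3)(2^(2k+1)+4)/(m·n)`,
independent of the bid `b`, and falls short of `qW k n m` by exactly `2/(m·n)`. -/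
theorem payoff_both_upper_hand
    (n m b k : ℕ) (hn : 1 ≤ n) (hm : 1 ≤ m) (hb1 : 1 ≤ b) (hb2 : b ≤ n - 1) :
    (1 - (b : ℚ) / (n : ℚ) * qU k m b - ((n - b : ℕ) : ℚ) / (n : ℚ) * qU k m (n - b)
      = 2 ^ (k + 1) / (n : ℚ) - 2 / 3 * (2 ^ (2 * k + 1) + 4) / ((m : ℚ) * (n : ℚ))) ∧
    (qW k n m -
      (1 - (b : ℚ) / (n : ℚ) * qU k m b - ((n - b : ℕ) : ℚ) / (n : ℚ) * qU k m (n - b))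
      = 2 / ((m : ℚ) * (n : ℚ))) ∧
    (1 - (b : ℚ) / (n : ℚ) * qU k m b - ((n - b : ℕ) : ℚ) / (n : ℚ) * qU k m (n - b)
      < qW k n m) := by
  have hbn : b < n := lt_of_le_of_lt hb2 (Nat.sub_lt hn one_pos)
  have hnb : 1 ≤ n - b := Nat.le_sub_of_add_le (by omega)
  have hn0 : (n : ℚ) ≠ 0 := Nat.cast_ne_zero.2 (by omega)
  have hm0 : (m : ℚ) ≠ 0 := Nat.cast_ne_zero.2 (by omega)
  have hb0 : (b : ℚ) ≠ 0 := Nat.cast_ne_zero.2 (by omega)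
  have hnb0 : ((n - b : ℕ) : ℚ) ≠ 0 := Nat.cast_ne_zero.2 (by omega)
  have hcast : ((n - b : ℕ) : ℚ) = (n : ℚ) - (b : ℚ) := by
    push_cast [Nat.cast_sub hbn.le]; ring
  have h1 : 1 - (b : ℚ) / (n : ℚ) * qU k m b - ((n - b : ℕ) : ℚ) / (n : ℚ) * qU k m (n - b)
      = 2 ^ (k + 1) / (n : ℚ) - 2 / 3 * (2 ^ (2 * k + 1) + 4) / ((m : ℚ) * (n : ℚ)) := by
    simp only [qU]
    rw [hcast]
    have hnb' : (n : ℚ) - (b : ℚ) ≠ 0 := hcast ▸ hnb0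
    field_simp
    ring
  have h2 : qW k n m -
      (1 - (b : ℚ) / (n : ℚ) * qU k m b - ((n - b : ℕ) : ℚ) / (n : ℚ) * qU k m (n - b))
      = 2 / ((m : ℚ) * (n : ℚ)) := by
    rw [h1, qW]
    field_simp
    ring
  refine ⟨h1, h2, ?_⟩
  have hpos : 0 < 2 / ((m : ℚ) * (n : ℚ)) := by positivity
  linarith [h2]
end

section
/- Let n, m, b, k, ℓ ∈ ℕ satisfy: n > 2^{k+1} and 2^k < m ≤ 2^{k+1} (Player 1 in the weeds at level k); 2^ℓ < b ≤ 2^{ℓ+1} and 2^{ℓ+1} < m (after a successful bid b, Player 2 would be in the weeds at level ℓ); and n − b > 2^k (after a failed bid, Player 2 would have the upper hand at level k). Then 1 − (b/n)·q_{W_ℓ}(m,b) − ((n−b)/n)·q_{U_k}(m,n−b) ≤ q_{W_k}(n,m), with equality if and only if ℓ = k−1 and b = 2^k. -/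
section WeedsGap

variable {α : Type*} [CommRing α] [LinearOrder α] [IsStrictOrderedRing α]

def weedsGap (x y m b : α) : α :=
  3 * (x - b) * (m - x) + (y - x) * (3 * m - 2 * y - 2 * x)

variable {x y m b : α}

lemma weedsGap_pos_of_two_mul_le (hx : 0 ≤ x) (hxy : 2 * x ≤ y) (hym : y < m) (hbx : b ≤ x)
    (hxm : x < m) (hne : x ≠ y) : 0 < weedsGap x y m b := by
  have hyx : 0 < y - x := sub_pos.2 (lt_of_le_of_ne (by linarith) hne)
  have hfactor : 0 < 3 * m - 2 * y - 2 * x := by linarith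
  unfold weedsGap
  nlinarith [mul_nonneg (sub_nonneg.2 hbx) (sub_pos.2 hxm).le, mul_pos hyx hfactor]

lemma weedsGap_nonneg_and_eq_zero_iff (hx : 0 ≤ x) (hxy : x = y ∨ 2 * x ≤ y) (hym : y < m)
    (hbx : b ≤ x) (hxm : x < m) :
    0 ≤ weedsGap x y m b ∧ (weedsGap x y m b = 0 ↔ b = x ∧ x = y) := by
  rcases eq_or_ne x y with rfl | hne
  · have hgap : weedsGap x x m b = 3 * (x - b) * (m - x) := by unfold weedsGap; ring
    rw [hgap]
    refine ⟨by nlinarith, ?_⟩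
    simp [sub_eq_zero, (sub_pos.2 hxm).ne', eq_comm]
  · have hpos := weedsGap_pos_of_two_mul_le hx (hxy.resolve_left hne) hym hbx hxm hne
    exact ⟨hpos.le, by simp [hpos.ne', hne]⟩

end WeedsGap

lemma two_pow_eq_or_two_mul_le {a c : ℕ} (h : a ≤ c) : 2 ^ a = 2 ^ c ∨ 2 * 2 ^ a ≤ 2 ^ c := by
  rcases h.eq_or_lt with rfl | h
  · exact .inl rfl
  · exact .inr (by rw [← pow_succ']; exact Nat.pow_le_pow_right two_pos h)

lemma qW_sub_bid_payoff (k ℓ n m b : ℕ) (hb : 0 < b) (hbn : b < n) (hm : 0 < m) :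
    qW k n m - (1 - (b : ℚ) / n * qW ℓ m b - ((n - b : ℕ) : ℚ) / n * qU k m (n - b))
      = weedsGap (2 ^ (ℓ + 1)) (2 ^ k) (m : ℚ) b / (3 * n * m) := by
  have hnb : ((n - b : ℕ) : ℚ) ≠ 0 := by exact_mod_cast (Nat.sub_pos_of_lt hbn).ne'
  have hn : (n : ℚ) ≠ 0 := by exact_mod_cast (hb.trans hbn).ne'
  unfold qW qU weedsGap
  rw [Nat.cast_sub hbn.le] at hnb ⊢
  field_simp
  ring

theorem weeds_case_I_general
    (n m b k ℓ : ℕ)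
    (hm1 : 2 ^ k < m) (hm2 : m ≤ 2 ^ (k + 1))
    (hb1 : 2 ^ ℓ < b) (hb2 : b ≤ 2 ^ (ℓ + 1)) (hbm : 2 ^ (ℓ + 1) < m)
    (hnb : 2 ^ k < n - b) :
    (1 - (b : ℚ) / (n : ℚ) * qW ℓ m b - ((n - b : ℕ) : ℚ) / (n : ℚ) * qU k m (n - b)
      ≤ qW k n m) ∧
    ((1 - (b : ℚ) / (n : ℚ) * qW ℓ m b - ((n - b : ℕ) : ℚ) / (n : ℚ) * qU k m (n - b)
      = qW k n m) ↔ (ℓ = k - 1 ∧ b = 2 ^ k)) := by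
  have hb : 0 < b := by omega
  have hbn : b < n := by omega
  have hm : 0 < m := by omega
  have hlk : ℓ + 1 ≤ k :=
    Nat.lt_succ_iff.1 <| (Nat.pow_lt_pow_iff_right one_lt_two).1 (hbm.trans_le hm2)
  have hgap := qW_sub_bid_payoff k ℓ n m b hb hbn hm
  obtain ⟨hnonneg, hzero⟩ := weedsGap_nonneg_and_eq_zero_iff
    (x := (2 : ℚ) ^ (ℓ + 1)) (y := 2 ^ k) (m := m) (b := b) (by positivity)
    (by exact_mod_cast two_pow_eq_or_two_mul_le hlk) (by exact_mod_cast hm1) (by exact_mod_cast hb2) (by exact_mod_cast hbm)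
  have hden : (0 : ℚ) < 3 * n * m :=
    mul_pos (mul_pos three_pos (by exact_mod_cast hb.trans hbn)) (by exact_mod_cast hm)
  constructor
  · linarith [div_nonneg hnonneg hden.le]
  · rw [eq_comm, ← sub_eq_zero, hgap, div_eq_zero_iff, or_iff_left hden.ne', hzero,
      pow_right_inj₀ two_pos one_lt_two.ne']
    constructor
    · rintro ⟨hb, rfl⟩
      exact ⟨rfl, by exact_mod_cast hb⟩
    · rintro ⟨hl, rfl⟩
      obtain rfl : k = ℓ + 1 := by omega
      simp

/-- Case I of the weeds lemma: Player 1 is in the weeds at level `k`; a successful bid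
`b` (with `2^ℓ < b ≤ 2^(ℓ+1)` and `2^(ℓ+1) < m`) would put Player 2 in the weeds at
level `ℓ`, while a failed bid (with `n − b > 2^k`) would give Player 2 the upper hand
at level `k`. Then the payoff is at most `qW k n m`, with equality if and only if
`ℓ = k − 1` and `b = 2^k`. -/
theorem weeds_case_I
    (n m b k ℓ : ℕ)
    (hn : 2 ^ (k + 1) < n) (hm1 : 2 ^ k < m) (hm2 : m ≤ 2 ^ (k + 1))
    (hb1 : 2 ^ ℓ < b) (hb2 : b ≤ 2 ^ (ℓ + 1)) (hbm : 2 ^ (ℓ + 1) < m)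
    (hnb : 2 ^ k < n - b) :
    (1 - (b : ℚ) / (n : ℚ) * qW ℓ m b - ((n - b : ℕ) : ℚ) / (n : ℚ) * qU k m (n - b)
      ≤ qW k n m) ∧
    ((1 - (b : ℚ) / (n : ℚ) * qW ℓ m b - ((n - b : ℕ) : ℚ) / (n : ℚ) * qU k m (n - b)
      = qW k n m) ↔ (ℓ = k - 1 ∧ b = 2 ^ k)) :=
  weeds_case_I_general n m b k ℓ hm1 hm2 hb1 hb2 hbm hnb
end

section
/- Let n, m, b, k, ℓ ∈ ℕ satisfy: 2^k < n ≤ 2^{k+1} and 2^k < m ≤ 2^{k+1} (Player 1 has the upper hand at level k and m is in the level-k range); 2^ℓ < b ≤ 2^{ℓ+1} and 2^{ℓ+1} < m (after a successful bid b, Player 2 would be in the weeds at level ℓ); and n − b > 2^k (after a failed bid, Player 2 would have the upper hand at level k). Then 1 − (b/n)·q_{W_ℓ}(m,b) − ((n−b)/n)·q_{U_k}(m,n−b) ≤ q_{U_k}(n,m). -/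
/-- Case I of the upper-hand lemma: Player 1 has the upper hand at level `k`
(with `m` in the level-`k` range); a successful bid `b` (with `2^ℓ < b ≤ 2^(ℓ+1)`
and `2^(ℓ+1) < m`) would put Player 2 in the weeds at level `ℓ`, while a failed bid
(with `n − b > 2^k`) would give Player 2 the upper hand at level `k`. Then the payoff
is at most `qU k n m`. -/
theorem upper_hand_case_I
    (n m b k ℓ : ℕ)
    (hn1 : 2 ^ k < n) (hn2 : n ≤ 2 ^ (k + 1))
    (hm1 : 2 ^ k < m) (hm2 : m ≤ 2 ^ (k + 1))
    (hb1 : 2 ^ ℓ < b) (hb2 : b ≤ 2 ^ (ℓ + 1)) (hbm : 2 ^ (ℓ + 1) < m)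
    (hnb : 2 ^ k < n - b) :
    1 - (b : ℚ) / (n : ℚ) * qW ℓ m b - ((n - b : ℕ) : ℚ) / (n : ℚ) * qU k m (n - b)
      ≤ qU k n m := by
  have hbn : b ≤ n := by omega
  have hlk : ℓ + 1 ≤ k := by
    have h := lt_of_lt_of_le hbm hm2
    have := (pow_lt_pow_iff_right₀ (a := 2) (by norm_num)).mp h
    omega
  have hcase : 2 * 2 ^ ℓ = 2 ^ k ∨ 4 * 2 ^ ℓ ≤ 2 ^ k := by
    rcases eq_or_lt_of_le hlk with h | h
    · left; rw [← h]; ring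
    · right
      calc 4 * 2 ^ ℓ = 2 ^ (ℓ + 2) := by ring
      _ ≤ 2 ^ k := Nat.pow_le_pow_right (by norm_num) (by omega)
  have hn0 : (0:ℚ) < n := by exact_mod_cast by omega
  have hm0 : (0:ℚ) < m := by exact_mod_cast by omega
  have hb0 : (0:ℚ) < b := by exact_mod_cast by omega
  have hc0 : (0:ℚ) < ((n - b : ℕ) : ℚ) := by exact_mod_cast by omega
  have hsub : ((n - b : ℕ) : ℚ) = (n : ℚ) - b := by push_cast [hbn]; ring
  have hcne : (n : ℚ) - b ≠ 0 := by rw [← hsub]; exact ne_of_gt hc0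
  set A : ℚ := 2 ^ k with hA
  set L : ℚ := 2 ^ ℓ with hL
  have key : qU k n m - (1 - (b : ℚ) / (n : ℚ) * qW ℓ m b
      - ((n - b : ℕ) : ℚ) / (n : ℚ) * qU k m (n - b))
      = (3 * m * ((n:ℚ) - b) - 3 * A * ((n:ℚ) + m) + 6 * L * b - 4 * L ^ 2
          + 4 * A ^ 2 + 6) / (3 * n * m) := by
    rw [qU, qU, qW, hsub]
    have e1 : (2:ℚ) ^ (2 * k) = A ^ 2 := by rw [hA]; ring
    have e2 : (2:ℚ) ^ (2 * ℓ + 1) = 2 * L ^ 2 := by rw [hL]; ring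
    have e3 : (2:ℚ) ^ (ℓ + 1) = 2 * L := by rw [hL]; ring
    rw [e1, e2, e3]
    field_simp
    ring
  rw [← sub_nonneg, key]
  apply div_nonneg _ (by positivity)
  have hM1 : A + 1 ≤ (m:ℚ) := by rw [hA]; exact_mod_cast hm1
  have hB1 : L + 1 ≤ (b:ℚ) := by rw [hL]; exact_mod_cast hb1
  have hB2 : (b:ℚ) ≤ 2 * L := by
    have : (b:ℚ) ≤ 2 ^ (ℓ + 1) := by exact_mod_cast hb2
    rw [pow_succ] at this; rw [hL]; linarith
  have hNB : A + 1 ≤ (n:ℚ) - b := by rw [← hsub, hA]; exact_mod_cast hnb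
  have hL0 : (0:ℚ) < L := by rw [hL]; positivity
  have h1 : 0 ≤ ((m:ℚ) - A) * (((n:ℚ) - b) - A - 1) :=
    mul_nonneg (by linarith) (by linarith)
  rcases hcase with h | h
  · have h' : 2 * L = A := by rw [hA, hL]; exact_mod_cast h
    rw [← h'] at h1 hM1 hNB ⊢
    linarith [h1]
  · have h' : 4 * L ≤ A := by rw [hA, hL]; exact_mod_cast h
    have h2 : 0 ≤ (A - 2 * L) * (2 * L - (b:ℚ)) :=
      mul_nonneg (by linarith) (by linarith)
    have h3 : 0 ≤ (A - 2 * L) * (A - 4 * L) :=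
      mul_nonneg (by linarith) (by linarith)
    linarith [h1, h2, h3]
end

section
/- Let a ∈ ℕ with a ≥ 2 and set L = ⌊log₂(a−1)⌋. Then for every i ∈ ℕ, (a − (2/3)·2^i)·2^i ≤ (a − (2/3)·2^L)·2^L = f(a); that is, f(a) = sup_{i ∈ ℕ} (a − (2/3)·2^i)·2^i and this supremum is attained at i = L. -/
/-- The piecewise linear function `f(a) = (a − (2/3)·2^⌊log₂(a−1)⌋)·2^⌊log₂(a−1)⌋`
arising in the analysis of the half-splitting bid in "Guess Who?". -/
def f (a : ℕ) : ℚ :=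
  ((a : ℚ) - 2 / 3 * 2 ^ (Nat.log 2 (a - 1))) * 2 ^ (Nat.log 2 (a - 1))

lemma key (a : ℕ) (ha : 2 ≤ a) (i : ℕ) :
    ((a : ℚ) - 2 / 3 * 2 ^ i) * 2 ^ i ≤ f a := by
  set L := Nat.log 2 (a - 1) with hL
  have h1 : 2 ^ L ≤ a - 1 := Nat.pow_log_le_self 2 (by omega)
  have h2 : a - 1 < 2 ^ (L + 1) := Nat.lt_pow_succ_log_self (by norm_num) _
  have hlow : (2 : ℚ) ^ L + 1 ≤ (a : ℚ) := by
    have : 2 ^ L + 1 ≤ a := by omega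
    have := (Nat.cast_le (α := ℚ)).2 this
    push_cast at this; linarith
  have hup : (a : ℚ) ≤ 2 ^ (L + 1) := by
    have : a ≤ 2 ^ (L + 1) := by omega
    have := (Nat.cast_le (α := ℚ)).2 this
    push_cast at this; linarith
  unfold f
  rw [← hL]
  rcases le_or_gt i L with h | h
  · rcases eq_or_lt_of_le h with rfl | h'
    · exact le_rfl
    · have hi1 : i + 1 ≤ L := h'
      have hle : (2 : ℚ) ^ (i + 1) ≤ 2 ^ L := by
        exact_mod_cast Nat.pow_le_pow_right (by norm_num) hi1
      have hle2 : (2 : ℚ) ^ i ≤ 2 ^ L := by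
        exact_mod_cast Nat.pow_le_pow_right (by norm_num) h
      rw [pow_succ] at hle
      nlinarith [sq_nonneg ((2:ℚ)^L - 2^i), sq_nonneg ((2:ℚ)^L + 2^i)]
  · have hle : (2 : ℚ) ^ (L + 1) ≤ 2 ^ i := by
      exact_mod_cast Nat.pow_le_pow_right (by norm_num) h
    have hle2 : (2 : ℚ) ^ L ≤ 2 ^ i := by
      exact_mod_cast Nat.pow_le_pow_right (by norm_num) h.le
    rw [pow_succ] at hle hup
    nlinarith [sq_nonneg ((2:ℚ)^i - 2^L)]

/-- For `a ≥ 2` and `L = ⌊log₂(a−1)⌋`, the linear functions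
`i ↦ (a − (2/3)·2^i)·2^i` are all at most their value at `i = L`, which is `f a`;
that is, `f a = sup_{i ∈ ℕ} (a − (2/3)·2^i)·2^i` and the supremum is attained
at `i = L`. -/
theorem f_eq_sup_of_linear (a : ℕ) (ha : 2 ≤ a) :
    (∀ i : ℕ, ((a : ℚ) - 2 / 3 * 2 ^ i) * 2 ^ i ≤ f a) ∧
    f a = ((a : ℚ) - 2 / 3 * 2 ^ (Nat.log 2 (a - 1))) * 2 ^ (Nat.log 2 (a - 1)) ∧
    IsGreatest (Set.range fun i : ℕ => ((a : ℚ) - 2 / 3 * 2 ^ i) * 2 ^ i) (f a) := by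
  refine ⟨key a ha, rfl, ⟨⟨Nat.log 2 (a - 1), rfl⟩, ?_⟩⟩
  rintro x ⟨i, rfl⟩
  exact key a ha i
end

section
/- Let n, b ∈ ℕ with 2 ≤ b ≤ n − 2. Then f(b) + f(n−b) ≥ f(⌊n/2⌋) + f(⌈n/2⌉). (Hence among all bids b splitting n into two parts of size at least 2, the balanced split minimizes f(b) + f(n−b).) -/
lemma f_succ (a : ℕ) (ha : 2 ≤ a) :
    f (a + 1) = f a + 2 ^ (Nat.log 2 a) := by
  set K := Nat.log 2 (a - 1) with hK
  have h1 : 2 ^ K ≤ a - 1 := Nat.pow_log_le_self 2 (by omega)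
  have h2 : a - 1 < 2 ^ (K + 1) := Nat.lt_pow_succ_log_self (by norm_num) _
  unfold f
  have h3 : a + 1 - 1 = a := rfl
  rw [h3]
  rcases lt_or_eq_of_le (show a ≤ 2 ^ (K + 1) by omega) with h | h
  · have hL : Nat.log 2 a = K := Nat.log_eq_of_pow_le_of_lt_pow (by omega) h
    rw [hL]
    push_cast
    ring
  · have hL : Nat.log 2 a = K + 1 := by rw [h, Nat.log_pow (by norm_num)]
    rw [hL]
    have hc : (a : ℚ) = 2 ^ (K + 1) := by exact_mod_cast congrArg (Nat.cast (R := ℚ)) h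
    push_cast
    rw [hc]
    ring

lemma f_step (a c : ℕ) (ha : 2 ≤ a) (hac : a ≤ c) :
    f (a + 1) + f c ≤ f a + f (c + 1) := by
  rw [f_succ a ha, f_succ c (le_trans ha hac)]
  have h : (2 : ℚ) ^ (Nat.log 2 a) ≤ 2 ^ (Nat.log 2 c) := by
    have := Nat.pow_le_pow_right (n := 2) (by norm_num) (Nat.log_mono_right (b := 2) hac)
    exact_mod_cast this
  linarith

lemma aux (n : ℕ) : ∀ d b, 2 ≤ b → 2 * b ≤ n → n / 2 - b = d →
    f (n / 2) + f ((n + 1) / 2) ≤ f b + f (n - b) := by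
  intro d
  induction d with
  | zero =>
    intro b hb h2 hd
    have hbb : b = n / 2 := by omega
    subst hbb
    have h : n - n / 2 = (n + 1) / 2 := by omega
    rw [h]
  | succ d ih =>
    intro b hb h2 hd
    have hb' : b < n / 2 := by omega
    have hle : b ≤ n - b - 1 := by omega
    have hstep : f (b + 1) + f (n - b - 1) ≤ f b + f (n - b) := by
      have := f_step b (n - b - 1) hb hle
      have h1 : n - b - 1 + 1 = n - b := by omega
      rwa [h1] at this
    have hih := ih (b + 1) (by omega) (by omega) (by omega)
    have h1 : n - (b + 1) = n - b - 1 := by omega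
    rw [h1] at hih
    linarith

/-- Among all splits of `n` into parts `b` and `n − b` of size at least 2, the
balanced split `⌊n/2⌋, ⌈n/2⌉` minimizes `f b + f (n − b)`. -/
theorem balanced_split_minimizes_f (n b : ℕ) (hb1 : 2 ≤ b) (hb2 : b ≤ n - 2) :
    f (n / 2) + f ((n + 1) / 2) ≤ f b + f (n - b) := by
  have hn : 4 ≤ n := by omega
  by_cases h : 2 * b ≤ n
  · exact aux n (n / 2 - b) b hb1 h rfl
  · have := aux n (n / 2 - (n - b)) (n - b) (by omega) (by omega) rfl
    have h1 : n - (n - b) = b := by omega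
    rw [h1] at this
    linarith
end

section
/- Let α be a real number with α > 2, and define α₀ = α and α_{j+1} = 2(α_j − 1) for j ∈ ℕ. Then the series ∑_{j=0}^{∞} (∏_{i=0}^{j−1} (1 − 1/α_i)) · (1/α_j) converges and its sum equals 2/α. (In ``Continuous Guess Who?'' under the optimal bidding ansatz, this is the probability that a player in the weeds with pool-ratio α ever escapes the weeds.) -/
/-- For the pool-ratio sequence `α₀ = α`, `α_{j+1} = 2(α_j − 1)` with `α > 2`:
the series `∑_j (∏_{i<j} (1 − 1/α_i)) · (1/α_j)` converges with sum `2/α`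
(the probability of ever escaping the weeds in "Continuous Guess Who?"). -/
theorem weeds_escape_probability (α : ℝ) (hα : 2 < α)
    (a : ℕ → ℝ) (ha0 : a 0 = α) (harec : ∀ j : ℕ, a (j + 1) = 2 * (a j - 1)) :
    HasSum (fun j : ℕ => (∏ i ∈ Finset.range j, (1 - 1 / a i)) * (1 / a j)) (2 / α) := by
  -- closed form: a n = 2^n * (α - 2) + 2
  have hform : ∀ n : ℕ, a n = 2 ^ n * (α - 2) + 2 := by
    intro n
    induction n with
    | zero => simpa using ha0
    | succ k ih => rw [harec k, ih]; ring
  have hα2 : (0:ℝ) < α - 2 := by linarith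
  have hgt2 : ∀ n, 2 < a n := by
    intro n
    rw [hform n]
    have : (0:ℝ) < 2 ^ n * (α - 2) := by positivity
    linarith
  have hpos : ∀ n, 0 < a n := fun n => lt_trans (by norm_num) (hgt2 n)
  set P : ℕ → ℝ := fun n => ∏ i ∈ Finset.range n, (1 - 1 / a i) with hP
  have hPpos : ∀ n, 0 < P n := by
    intro n
    apply Finset.prod_pos
    intro i _
    have h1 : 1 / a i < 1 := by
      rw [div_lt_one (hpos i)]; linarith [hgt2 i]
    linarith
  have hPle : ∀ n, P n ≤ 1 := by
    intro n
    apply Finset.prod_le_one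
    · intro i _
      have h1 : 1 / a i ≤ 1 := by
        rw [div_le_one (hpos i)]; linarith [hgt2 i]
      linarith
    · intro i _
      have h2 := hpos i
      have : 0 < 1 / a i := by positivity
      linarith
  -- partial sums
  have hpartial : ∀ n : ℕ, ∑ j ∈ Finset.range n, P j * (1 / a j) = 2 / α - 2 * P n / a n := by
    intro n
    induction n with
    | zero => simp [hP, ha0]
    | succ k ih =>
      rw [Finset.sum_range_succ, ih]
      have hPk : P (k+1) = P k * (1 - 1 / a k) := Finset.prod_range_succ _ _
      rw [hPk, harec k]
      have hk := hpos k
      have hk2 := hgt2 k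
      have hk1 : a k - 1 ≠ 0 := by linarith
      field_simp
      ring
  have hnonneg : ∀ j, 0 ≤ P j * (1 / a j) := by
    intro j
    have h1 := hPpos j
    have h2 := hpos j
    positivity
  rw [hasSum_iff_tendsto_nat_of_nonneg hnonneg]
  simp only [hpartial]
  have haT : Filter.Tendsto a Filter.atTop Filter.atTop := by
    have h1 : Filter.Tendsto (fun n : ℕ => (2:ℝ) ^ n) Filter.atTop Filter.atTop :=
      tendsto_pow_atTop_atTop_of_one_lt (by norm_num)
    have h2 := h1.atTop_mul_const hα2
    have h3 := Filter.tendsto_atTop_add_const_right Filter.atTop (2:ℝ) h2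
    have : a = fun n => 2 ^ n * (α - 2) + 2 := funext hform
    rw [this]; exact h3
  have hlim : Filter.Tendsto (fun n => 2 * P n / a n) Filter.atTop (nhds 0) := by
    apply squeeze_zero (g := fun n => 2 / a n)
    · intro n
      have h1 := hPpos n
      have h2 := hpos n
      positivity
    · intro n
      have h1 := hPle n
      have h2 := hpos n
      gcongr
      linarith
    · exact Filter.Tendsto.div_atTop tendsto_const_nhds haT
  have := Filter.Tendsto.sub (tendsto_const_nhds (x := 2/α) (f := Filter.atTop)) hlim
  simpa using this
end

section
/- For every real number α with 1 ≤ α ≤ 2, one has 5/8 ≤ 1 − 1/α + 2/(3α²) ≤ 2/3; the value 2/3 is attained at α = 1 and at α = 2, and the value 5/8 is attained at α = 4/3. -/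
/-- The first-move advantage in "Continuous Guess Who?": for `1 ≤ α ≤ 2`, the winning
probability `1 − 1/α + 2/(3α²)` from equal pools lies between `5/8` and `2/3`; the
value `2/3` is attained at `α = 1` and `α = 2`, and the value `5/8` at `α = 4/3`. -/
theorem first_move_advantage_bounds :
    (∀ α : ℝ, 1 ≤ α → α ≤ 2 →
      5 / 8 ≤ 1 - 1 / α + 2 / (3 * α ^ 2) ∧ 1 - 1 / α + 2 / (3 * α ^ 2) ≤ 2 / 3) ∧
    (1 - 1 / (1 : ℝ) + 2 / (3 * (1 : ℝ) ^ 2) = 2 / 3) ∧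
    (1 - 1 / (2 : ℝ) + 2 / (3 * (2 : ℝ) ^ 2) = 2 / 3) ∧
    (1 - 1 / ((4 : ℝ) / 3) + 2 / (3 * ((4 : ℝ) / 3) ^ 2) = 5 / 8) := by
  refine ⟨fun α h1 h2 => ?_, by norm_num, by norm_num, by norm_num⟩
  have hα : (0:ℝ) < α := by linarith
  have e : 1 - 1/α + 2/(3*α^2) = (3*α^2 - 3*α + 2)/(3*α^2) := by
    field_simp
  rw [e]
  constructor
  · rw [div_le_div_iff₀ (by norm_num) (by positivity)]
    nlinarith [sq_nonneg (3*α - 4)]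
  · rw [div_le_div_iff₀ (by positivity) (by norm_num)]
    nlinarith
end
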